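/- arXiv:1011.4364 — 2 statements merged into one kernel-verified Lean document; each statement's English description precedes it below -/
import Mathlib

section
/- Let κ > 0, κ₂, a, b, c, K be real constants with K > (|κ₂| + a + 2b + c)/κ, and let a trajectory γ be broken into p pieces in M with total action A_M and p+1 pieces in H with total action A_H, with A(γ) = A_M + A_H and each piece in M having action > K so that p ≤ A(γ)/K. If μ(γ) ≥ κ·A_M + κ₂p + N·A_H − a(p+1) − 2bp − c(p+1) for some N ≥ κ, then μ(γ) ≥ (κ − (|κ₂| + a + 2b + c)/K)·A(γ) − a − c. -/
/-- Key estimate in the proof that weak index-positivity is preserved under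
subcritical contact surgery. -/
theorem stmt_7 (κ κ₂ a b c K N μ AM AH A : ℝ) (p : ℕ)
    (hκ : 0 < κ) (ha : 0 ≤ a) (hb : 0 ≤ b) (hc : 0 ≤ c) (hK : 0 < K)
    (hKbig : K > (|κ₂| + a + 2 * b + c) / κ)
    (hA : A = AM + AH) (hAM : 0 < AM) (hAH : 0 < AH)
    (hp : (p : ℝ) ≤ A / K)
    (hN : N ≥ κ)
    (hμ : μ ≥ κ * AM + κ₂ * p + N * AH - a * ((p : ℝ) + 1) - 2 * b * p
      - c * ((p : ℝ) + 1)) :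
    μ ≥ (κ - (|κ₂| + a + 2 * b + c) / K) * A - a - c := by
  have habs : -|κ₂| ≤ κ₂ := neg_abs_le κ₂
  have habs0 : 0 ≤ |κ₂| := abs_nonneg κ₂
  have hpn : (0:ℝ) ≤ p := Nat.cast_nonneg p
  have hS : 0 ≤ |κ₂| + a + 2 * b + c := by positivity
  have h1 : ((|κ₂| + a + 2 * b + c)) * p ≤ (|κ₂| + a + 2 * b + c) * (A / K) :=
    mul_le_mul_of_nonneg_left hp hS
  have h2 : κ₂ * p ≥ -|κ₂| * p := mul_le_mul_of_nonneg_right habs hpn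
  have h3 : N * AH ≥ κ * AH := mul_le_mul_of_nonneg_right hN hAH.le
  have hdiv : (|κ₂| + a + 2 * b + c) / K * A = (|κ₂| + a + 2 * b + c) * (A / K) := by
    field_simp
  nlinarith [mul_nonneg hpn ha, mul_nonneg hpn hb, mul_nonneg hpn hc, mul_nonneg hpn habs0]
end

section
/- For the Ustilosky sphere with data e(S_{pπ}) = (n−1)p + 1, Δ(S_{pπ}) = 2((n−2)p + 2), σ(S_{pπ}) = 1, the Morse–Bott MEC formula gives χ⁺(M, ξ_p) = ((n−1)p + 1)/(2((n−2)p + 2)). Moreover, for n ≥ 3 fixed, the map p ↦ ((n−1)p + 1)/(2((n−2)p + 2)) is injective on positive integers p, so the mean Euler characteristic distinguishes infinitely many contact structures. -/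
open Set

theorem strictMonoOn_div_affine {K : Type*} [Field K] [LinearOrder K] [IsStrictOrderedRing K]
    {a b c d : K} (hdet : b * c < a * d) :
    StrictMonoOn (fun x => (a * x + b) / (c * x + d)) {x | 0 < c * x + d} := by
  intro x hx y hy hxy
  simp only [mem_ofPred_eq] at hx hy ⊢
  rw [div_lt_div_iff₀ hx hy]
  have cross : (a * y + b) * (c * x + d) - (a * x + b) * (c * y + d) = (a * d - b * c) * (y - x) := by
    ring
  linarith [mul_pos (sub_pos.2 hdet) (sub_pos.2 hxy)]

/-- For the Ustilosky spheres, the map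
`p ↦ ((n-1)p + 1)/(2((n-2)p + 2))` is injective on positive integers, for any
fixed `n ≥ 3`; hence the mean Euler characteristic distinguishes infinitely many
contact structures. -/
theorem stmt_13 (n : ℕ) (hn : 3 ≤ n) :
    ∀ p₁ p₂ : ℕ, 0 < p₁ → 0 < p₂ →
      (((n : ℚ) - 1) * p₁ + 1) / (2 * (((n : ℚ) - 2) * p₁ + 2)) =
      (((n : ℚ) - 1) * p₂ + 1) / (2 * (((n : ℚ) - 2) * p₂ + 2)) →
      p₁ = p₂ := by
  intro p₁ p₂ _ _ h
  have hn' : (3 : ℚ) ≤ n := by exact_mod_cast hn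
  have hmono := strictMonoOn_div_affine (a := (n : ℚ) - 1) (b := 1) (c := 2 * ((n : ℚ) - 2))
    (d := 4) (by linarith)
  have hdom : ∀ p : ℕ, (p : ℚ) ∈ {x : ℚ | 0 < 2 * ((n : ℚ) - 2) * x + 4} := fun p => by
    simp only [mem_ofPred_eq]
    nlinarith [Nat.cast_nonneg (α := ℚ) p]
  have hden : ∀ x : ℚ, 2 * ((n - 2) * x + 2) = 2 * ((n : ℚ) - 2) * x + 4 := fun x => by ring
  have hp : (p₁ : ℚ) = p₂ := hmono.injOn (hdom p₁) (hdom p₂) (by simpa only [hden] using h)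
  exact_mod_cast hp
end
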